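/- arXiv:1705.05721 — 2 statements merged into one kernel-verified Lean document; each statement's English description precedes it below -/
import Mathlib

section
/- Let Ω ⊆ ℝⁿ be open, let B : Ω → GL(n,ℝ) be continuously differentiable, and let F₀ : ℝⁿ → ℝ and F : Ω × ℝⁿ → ℝ be functions satisfying F(x, B(x)ξ) = F₀(ξ) for all x ∈ Ω and ξ ∈ ℝⁿ. Let γ : [0,1] → Ω be a continuously differentiable curve and let Y : [0,1] → ℝⁿ be differentiable with Y'(t) = (d/dt)(B∘γ)(t) · B(γ(t))⁻¹ · Y(t) for all t ∈ [0,1]. Then F(γ(t), Y(t)) = F(γ(0), Y(0)) for all t ∈ [0,1]. -/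
/-!
Let `L t` be the operator of `B (γ t)` on Euclidean space. The transport equation reads
`Y' = L' L⁻¹ Y`, so `ξ = L⁻¹ Y` has derivative `-L⁻¹ L' L⁻¹ Y + L⁻¹ Y' = 0` and is constant
on `[0, 1]`. Since `Y t = L t (ξ t)`, the invariance `F(x, B(x)ξ) = F₀(ξ)` gives
`F (γ t) (Y t) = F₀ (ξ t)`, which is therefore constant as well.
-/

open Matrix

theorem map_ringInverse_of_isUnit {M N F : Type*} [MonoidWithZero M] [MonoidWithZero N]
    [FunLike F M N] [MonoidHomClass F M N] (f : F) {x : M} (hx : IsUnit x) :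
    f (Ring.inverse x) = Ring.inverse (f x) := by
  obtain ⟨u, rfl⟩ := hx
  simpa using (Ring.inverse_unit (Units.map (f : M →* N) u)).symm

theorem Matrix.hasDerivWithinAt_apply_of_entrywise {𝕜 F G m n : Type*} [NontriviallyNormedField 𝕜]
    [NormedAddCommGroup F] [NormedSpace 𝕜 F] [Fintype m] [Fintype n] [DecidableEq m]
    [DecidableEq n] [FunLike G (Matrix m n 𝕜) F] [LinearMapClass G 𝕜 (Matrix m n 𝕜) F] (Φ : G)
    {A : 𝕜 → Matrix m n 𝕜} {A' : Matrix m n 𝕜} {s : Set 𝕜} {t : 𝕜}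
    (hA : ∀ i j, HasDerivWithinAt (fun r => A r i j) (A' i j) s t) :
    HasDerivWithinAt (fun r => Φ (A r)) (Φ A') s t := by
  have hΦ : ∀ N : Matrix m n 𝕜, Φ N = ∑ i, ∑ j, N i j • Φ (single i j 1) := fun N => by
    conv_lhs => rw [matrix_eq_sum_single N]
    simp only [map_sum, ← map_smul, smul_single, smul_eq_mul, mul_one]
  convert HasDerivWithinAt.fun_sum fun i _ => HasDerivWithinAt.fun_sum fun j _ =>
    (hA i j).smul_const (Φ (single i j 1)) using 1
  · exact funext fun r => hΦ (A r)
  · exact hΦ A'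

theorem constant_of_hasDerivWithinAt_Icc_zero {E : Type*} [NormedAddCommGroup E]
    [NormedSpace ℝ E] {f : ℝ → E} {a b : ℝ}
    (hf : ∀ x ∈ Set.Icc a b, HasDerivWithinAt f 0 (Set.Icc a b) x) :
    ∀ x ∈ Set.Icc a b, f x = f a :=
  constant_of_has_deriv_right_zero (fun x hx => (hf x hx).continuousWithinAt) fun x hx =>
    (hf x (Set.Ico_subset_Icc_self hx)).mono_of_mem_nhdsWithin (Icc_mem_nhdsGE_of_mem hx)

theorem hasDerivWithinAt_ringInverse_apply_eq_zero {𝕜 E : Type*} [NontriviallyNormedField 𝕜]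
    [NormedAddCommGroup E] [NormedSpace 𝕜 E] [CompleteSpace E]
    {L : 𝕜 → E →L[𝕜] E} {L' : E →L[𝕜] E} {Y : 𝕜 → E} {s : Set 𝕜} {t : 𝕜}
    (hL : HasDerivWithinAt L L' s t) (hunit : IsUnit (L t))
    (hY : HasDerivWithinAt Y (L' (Ring.inverse (L t) (Y t))) s t) :
    HasDerivWithinAt (fun r => Ring.inverse (L r) (Y r)) 0 s t := by
  obtain ⟨u, hu⟩ := hunit
  have hinv : HasDerivWithinAt (fun r => Ring.inverse (L r))
      (-(Ring.inverse (L t) * L' * Ring.inverse (L t))) s t := by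
    have := (hu ▸ hasFDerivAt_ringInverse (𝕜 := 𝕜) u).comp_hasDerivWithinAt t hL
    rw [← hu, Ring.inverse_unit]
    exact this
  convert hinv.clm_apply hY using 1
  simp

theorem parallel_transport_preserves_finsler_general
    (n : ℕ) (Ω : Set (EuclideanSpace ℝ (Fin n)))
    (B : EuclideanSpace ℝ (Fin n) → Matrix (Fin n) (Fin n) ℝ)
    (hBinv : ∀ x ∈ Ω, IsUnit (B x))
    (F₀ : EuclideanSpace ℝ (Fin n) → ℝ)
    (F : EuclideanSpace ℝ (Fin n) → EuclideanSpace ℝ (Fin n) → ℝ)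
    (hFB : ∀ x ∈ Ω, ∀ ξ : EuclideanSpace ℝ (Fin n), F x (WithLp.toLp 2 ((B x).mulVec ξ)) = F₀ ξ)
    (γ : ℝ → EuclideanSpace ℝ (Fin n))
    (hγΩ : ∀ t ∈ Set.Icc (0 : ℝ) 1, γ t ∈ Ω)
    (M : ℝ → Matrix (Fin n) (Fin n) ℝ)
    (hM : ∀ t ∈ Set.Icc (0 : ℝ) 1, ∀ i j,
      HasDerivWithinAt (fun s => B (γ s) i j) (M t i j) (Set.Icc 0 1) t)
    (Y : ℝ → EuclideanSpace ℝ (Fin n))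
    (hY : ∀ t ∈ Set.Icc (0 : ℝ) 1,
      HasDerivWithinAt Y
        ((WithLp.toLp 2 ((M t * (B (γ t))⁻¹).mulVec (Y t)) : EuclideanSpace ℝ (Fin n)))
        (Set.Icc 0 1) t) :
    ∀ t ∈ Set.Icc (0 : ℝ) 1, F (γ t) (Y t) = F (γ 0) (Y 0) := by
  set I := Set.Icc (0 : ℝ) 1
  set L : ℝ → EuclideanSpace ℝ (Fin n) →L[ℝ] EuclideanSpace ℝ (Fin n) :=
    fun s => toEuclideanCLM (𝕜 := ℝ) (n := Fin n) (B (γ s))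
  have hunit : ∀ s ∈ I, IsUnit (L s) := fun s hs => (hBinv _ (hγΩ s hs)).map toEuclideanCLM
  have hLinv : ∀ s ∈ I, Ring.inverse (L s) = toEuclideanCLM (𝕜 := ℝ) (B (γ s))⁻¹ := fun s hs => by
    rw [nonsing_inv_eq_ringInverse, map_ringInverse_of_isUnit _ (hBinv _ (hγΩ s hs))]
  have hF : ∀ s ∈ I, F (γ s) (Y s) = F₀ (Ring.inverse (L s) (Y s)) := fun s hs => by
    rw [← hFB _ (hγΩ s hs), ← toEuclideanCLM_toLp, WithLp.toLp_ofLp, ← mul_apply_eq_comp,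
      Ring.mul_inverse_cancel _ (hunit s hs), one_apply_eq_self]
  have hξ : ∀ s ∈ I, HasDerivWithinAt (fun r => Ring.inverse (L r) (Y r)) 0 I s := fun s hs => by
    refine hasDerivWithinAt_ringInverse_apply_eq_zero
      (hasDerivWithinAt_apply_of_entrywise toEuclideanCLM (hM s hs)) (hunit s hs) ?_
    refine (hY s hs).congr_deriv ?_
    rw [hLinv s hs, ← toEuclideanCLM_toLp, WithLp.toLp_ofLp, ← mul_apply_eq_comp, ← map_mul]
  intro t ht
  rw [hF t ht, hF 0 (Set.left_mem_Icc.2 zero_le_one), constant_of_hasDerivWithinAt_Icc_zero hξ t ht]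

/-- parallel transport for the connection with Christoffel symbols
`Γᵢ = −(∂ᵢB)B⁻¹` preserves the Finsler function. In local coordinates: if
`F(x, B(x)ξ) = F₀(ξ)`, `γ : [0,1] → Ω` is a C¹ curve and `Y` solves the linear ODE
`Y'(t) = (d/dt)(B∘γ)(t) · B(γ(t))⁻¹ · Y(t)` on `[0,1]`, then `F(γ(t), Y(t))` is
constant. Here `M t` denotes the derivative of `t ↦ B(γ(t))`. -/
theorem parallel_transport_preserves_finsler
    (n : ℕ) (Ω : Set (EuclideanSpace ℝ (Fin n))) (hΩ : IsOpen Ω)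
    (B : EuclideanSpace ℝ (Fin n) → Matrix (Fin n) (Fin n) ℝ)
    (hBsmooth : ∀ i j, ContDiffOn ℝ 1 (fun x => B x i j) Ω)
    (hBinv : ∀ x ∈ Ω, IsUnit (B x))
    (F₀ : EuclideanSpace ℝ (Fin n) → ℝ)
    (F : EuclideanSpace ℝ (Fin n) → EuclideanSpace ℝ (Fin n) → ℝ)
    (hFB : ∀ x ∈ Ω, ∀ ξ : EuclideanSpace ℝ (Fin n), F x (WithLp.toLp 2 ((B x).mulVec ξ)) = F₀ ξ)
    (γ : ℝ → EuclideanSpace ℝ (Fin n))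
    (hγ : ContDiffOn ℝ 1 γ (Set.Icc 0 1))
    (hγΩ : ∀ t ∈ Set.Icc (0 : ℝ) 1, γ t ∈ Ω)
    (M : ℝ → Matrix (Fin n) (Fin n) ℝ)
    (hM : ∀ t ∈ Set.Icc (0 : ℝ) 1, ∀ i j,
      HasDerivWithinAt (fun s => B (γ s) i j) (M t i j) (Set.Icc 0 1) t)
    (Y : ℝ → EuclideanSpace ℝ (Fin n))
    (hY : ∀ t ∈ Set.Icc (0 : ℝ) 1,
      HasDerivWithinAt Y
        ((WithLp.toLp 2 ((M t * (B (γ t))⁻¹).mulVec (Y t)) : EuclideanSpace ℝ (Fin n)))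
        (Set.Icc 0 1) t) :
    ∀ t ∈ Set.Icc (0 : ℝ) 1, F (γ t) (Y t) = F (γ 0) (Y 0) :=
  parallel_transport_preserves_finsler_general n Ω B hBinv F₀ F hFB γ hγΩ M hM Y hY
end

section
/- Let v ∈ ℝⁿ satisfy ‖v‖ < 1 for the Euclidean norm, and let K = v + B̄(0,1) be the translate by v of the closed Euclidean unit ball. Then the Minkowski functional (gauge) of K satisfies, for every ξ ∈ ℝⁿ, gauge(K)(ξ) = (√(⟨v,ξ⟩² + (1−‖v‖²)‖ξ‖²) − ⟨v,ξ⟩) / (1−‖v‖²), where ⟨·,·⟩ is the Euclidean inner product. -/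
open scoped RealInnerProductSpace Pointwise

noncomputable section

/-!
For `t > 0` the dilate `t • (v + B̄(0,1))` is the ball `B̄(t v, t)`, so `ξ` lies in it iff
`‖ξ - t v‖² ≤ t²`, i.e. iff `(1 - ‖v‖²) t² + 2 ⟪v, ξ⟫ t - ‖ξ‖² ≥ 0`. This quadratic in `t` opens
upwards and is `≤ 0` at `t = 0`, so on `t > 0` it is nonnegative exactly from its larger root on;
that root is therefore the infimum defining the gauge.
-/

theorem gauge_eq_of_forall_mem_smul_iff {E : Type*} [AddCommGroup E] [Module ℝ E]
    {s : Set E} {x : E} {r : ℝ} (hr : 0 ≤ r) (h : ∀ t, 0 < t → (x ∈ t • s ↔ r ≤ t)) :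
    gauge s x = r := by
  have hset : {t | t ∈ Set.Ioi 0 ∧ x ∈ t • s} = Set.Ioi 0 ∩ Set.Ici r := by
    ext t
    simp only [Set.mem_ofPred_eq, Set.mem_inter_iff, Set.mem_Ioi, Set.mem_Ici]
    exact and_congr_right (h t)
  rw [gauge_def, hset]
  rcases hr.eq_or_lt with rfl | hr
  · rw [Set.inter_eq_left.2 Set.Ioi_subset_Ici_self, csInf_Ioi]
  · rw [Set.inter_eq_right.2 (Set.Ici_subset_Ioi.2 hr), csInf_Ici]

theorem smul_vadd_closedBall_zero {E : Type*} [NormedAddCommGroup E] [NormedSpace ℝ E]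
    (v : E) {t : ℝ} (ht : 0 < t) (r : ℝ) :
    t • (v +ᵥ Metric.closedBall (0 : E) r) = Metric.closedBall (t • v) (t * r) := by
  rw [Metric.vadd_closedBall, smul_closedBall' ht.ne', vadd_eq_add, add_zero,
    Real.norm_of_nonneg ht.le]

theorem norm_sub_smul_le_iff {E : Type*} [NormedAddCommGroup E] [InnerProductSpace ℝ E]
    (v ξ : E) {t : ℝ} (ht : 0 ≤ t) :
    ‖ξ - t • v‖ ≤ t ↔ ‖ξ‖ ^ 2 ≤ (1 - ‖v‖ ^ 2) * t ^ 2 + 2 * ⟪v, ξ⟫ * t := by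
  rw [← sq_le_sq₀ (norm_nonneg _) ht, norm_sub_sq_real, real_inner_smul_right, norm_smul,
    Real.norm_of_nonneg ht, real_inner_comm]
  constructor <;> intro h <;> linarith

theorem quadratic_root_nonneg {a b c : ℝ} (ha : 0 < a) (hc : 0 ≤ c) :
    0 ≤ (√(b ^ 2 + a * c) - b) / a := by
  have hb : b ≤ √(b ^ 2 + a * c) :=
    (le_abs_self b).trans ((Real.sqrt_sq_eq_abs b).symm.le.trans
      (Real.sqrt_le_sqrt (by nlinarith)))
  exact div_nonneg (sub_nonneg.2 hb) ha.le

theorem quadratic_root_le_iff {a b c t : ℝ} (ha : 0 < a) (hc : 0 ≤ c) (ht : 0 < t) :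
    (√(b ^ 2 + a * c) - b) / a ≤ t ↔ c ≤ a * t ^ 2 + 2 * b * t := by
  rw [div_le_iff₀ ha, sub_le_iff_le_add, Real.sqrt_le_iff]
  constructor
  · rintro ⟨-, h⟩
    nlinarith
  · intro h
    -- `t (a t + 2 b) ≥ c ≥ 0` forces `a t + 2 b ≥ 0`, hence `a t + b ≥ 0` whatever the sign of `b`.
    have hlin : 0 ≤ a * t + 2 * b := by nlinarith
    have hroot : 0 ≤ t * a + b := by rcases le_total 0 b with hb | hb <;> nlinarith
    exact ⟨hroot, by nlinarith⟩

/-- explicit formula for the Minkowski functional (gauge) of the unit ball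
of a Randers-type norm, i.e. of the translate `v + B̄(0,1)` of the closed Euclidean unit
ball by a vector `v` with `‖v‖ < 1`. -/
theorem gauge_translated_ball_formula
    (n : ℕ) (v : EuclideanSpace ℝ (Fin n)) (hv : ‖v‖ < 1) :
    ∀ ξ : EuclideanSpace ℝ (Fin n),
      gauge (v +ᵥ Metric.closedBall (0 : EuclideanSpace ℝ (Fin n)) 1) ξ =
        (Real.sqrt (⟪v, ξ⟫ ^ 2 + (1 - ‖v‖ ^ 2) * ‖ξ‖ ^ 2) - ⟪v, ξ⟫) /
          (1 - ‖v‖ ^ 2) := by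
  intro ξ
  have hD : 0 < 1 - ‖v‖ ^ 2 := by nlinarith [norm_nonneg v]
  refine gauge_eq_of_forall_mem_smul_iff (quadratic_root_nonneg hD (sq_nonneg _)) fun t ht => ?_
  rw [smul_vadd_closedBall_zero v ht, mul_one, Metric.mem_closedBall, dist_eq_norm,
    norm_sub_smul_le_iff v ξ ht.le, quadratic_root_le_iff hD (sq_nonneg _) ht]
end
end
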